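/- arXiv:2402.11766 — 6 statements merged into one kernel-verified Lean document; each statement's English description precedes it below -/
import Mathlib

section
/- Let G=(V,E) be a connected simple graph and let M ⊆ V be a well-connected set of G. For any v ∈ M, if |M| > |N(v)| + 1, where N(v) denotes the set of neighbors of v in G, then at least one neighbor of v does not belong to M, i.e., N(v) ⊄ M. -/
/-- A set `M` of vertices of `G` is *well-connected* if (i) any two distinct
vertices of `M` are joined by a path in `G` avoiding all other vertices of `M`,
and (ii) the subgraph induced by the complement of `M` is connected
(the empty induced subgraph being regarded as connected). -/
def IsWCS {V : Type*} (G : SimpleGraph V) (M : Set V) : Prop :=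
  (∀ u ∈ M, ∀ v ∈ M, u ≠ v →
    ∃ p : G.Walk u v, ∀ w ∈ p.support, w ∈ M → w = u ∨ w = v) ∧
  (G.induce Mᶜ).Preconnected

/-! If all neighbours of `v ∈ M` lie in `M`, then a path from `v` to another `u ∈ M` avoiding
the rest of `M` must step from `v` straight to `u`. So `M ⊆ {v} ∪ N(v)`, whence
`|M| ≤ |N(v)| + 1`. -/

namespace IsWCS

variable {V : Type*} {G : SimpleGraph V} {M : Set V} {v : V}

theorem adj_of_neighborSet_subset (hM : IsWCS G M) (hv : v ∈ M) (hsub : G.neighborSet v ⊆ M)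
    {u : V} (hu : u ∈ M) (huv : u ≠ v) : G.Adj v u := by
  obtain ⟨p, hp⟩ := hM.1 v hv u hu huv.symm
  have hnil : ¬ p.Nil := SimpleGraph.Walk.not_nil_of_ne huv.symm
  have hadj : G.Adj v p.snd := p.adj_snd hnil
  rcases hp p.snd (p.getVert_mem_support 1) (hsub hadj) with hsnd | hsnd
  · exact absurd hsnd.symm (G.ne_of_adj hadj)
  · exact hsnd ▸ hadj

theorem subset_insert_neighborSet (hM : IsWCS G M) (hv : v ∈ M)
    (hsub : G.neighborSet v ⊆ M) : M ⊆ insert v (G.neighborSet v) := fun u hu =>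
  (eq_or_ne u v).imp id (hM.adj_of_neighborSet_subset hv hsub hu)

theorem card_le_card_neighborFinset_add_one [Fintype V] [DecidableRel G.Adj] (hM : IsWCS G M)
    (hv : v ∈ M) (hsub : G.neighborSet v ⊆ M) :
    Nat.card M ≤ (G.neighborFinset v).card + 1 :=
  calc Nat.card M = M.ncard := Nat.card_coe_set_eq M
    _ ≤ (insert v (G.neighborSet v)).ncard :=
      Set.ncard_le_ncard (hM.subset_insert_neighborSet hv hsub) (Set.toFinite _)
    _ ≤ (G.neighborSet v).ncard + 1 := Set.ncard_insert_le _ _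
    _ = (G.neighborFinset v).card + 1 := by
      rw [Set.ncard_eq_toFinset_card', SimpleGraph.neighborFinset_def]

end IsWCS

theorem wcs_orphan_neighbor_general {V : Type*} [Fintype V] (G : SimpleGraph V)
    [DecidableRel G.Adj] (M : Set V) (hM : IsWCS G M)
    (v : V) (hv : v ∈ M) (hcard : (G.neighborFinset v).card + 1 < Nat.card M) :
    ¬ G.neighborSet v ⊆ M := fun hsub =>
  (hM.card_le_card_neighborFinset_add_one hv hsub).not_gt hcard

/-- If `M` is a well-connected set of a connected graph `G` and `v ∈ M` satisfies
`|M| > |N(v)| + 1`, then at least one neighbor of `v` lies outside `M`. -/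
theorem wcs_orphan_neighbor {V : Type*} [Fintype V] (G : SimpleGraph V)
    [DecidableRel G.Adj] (hG : G.Connected) (M : Set V) (hM : IsWCS G M)
    (v : V) (hv : v ∈ M) (hcard : (G.neighborFinset v).card + 1 < Nat.card M) :
    ¬ G.neighborSet v ⊆ M :=
  wcs_orphan_neighbor_general G M hM v hv hcard
end

section
/- Let G=(V,E) be a connected simple graph with at least two vertices and maximum vertex degree Δ. Then every well-connected set M of G (in particular a largest well-connected set) satisfies |M| ≤ max( ((Δ−1)/Δ)·|V| , Δ+1 ). -/
/-!
If `|M| ≥ Δ + 2`, no vertex `u ∈ M` is adjacent to all of `M ∖ {u}`, and the first step of a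
path from `u` to a non-neighbour in `M` avoiding the rest of `M` leaves `M`. Hence every vertex of
`M` has a neighbour outside `M`; this forces `|Mᶜ| ≥ 2`, and then connectivity of `G[Mᶜ]` gives
every vertex outside `M` a neighbour outside `M`, so at most `Δ - 1` neighbours inside. Counting
the edges between `M` and `Mᶜ` yields `|M| ≤ (Δ - 1)·|Mᶜ|`, i.e. `Δ·|M| ≤ (Δ - 1)·|V|`.
-/

open Finset

namespace IsWCS

variable {V : Type*} {G : SimpleGraph V}

lemma exists_adj_notMem_of_not_adj {M : Set V} (hM : IsWCS G M) {u v : V} (hu : u ∈ M)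
    (hv : v ∈ M) (huv : u ≠ v) (hadj : ¬ G.Adj u v) : ∃ x ∉ M, G.Adj u x := by
  obtain ⟨p, hp⟩ := hM.1 u hu v hv huv
  have hu_snd : G.Adj u p.snd := p.adj_snd (p.not_nil_of_ne huv)
  refine ⟨p.snd, fun hx => ?_, hu_snd⟩
  rcases hp _ (p.getVert_mem_support 1) hx with h | h
  · exact hu_snd.ne h.symm
  · exact hadj (h ▸ hu_snd)

lemma exists_adj_notMem_of_notMem {M : Set V} (hM : IsWCS G M) {x y : V} (hx : x ∉ M)
    (hy : y ∉ M) (hxy : x ≠ y) : ∃ z ∉ M, G.Adj x z := by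
  have : Nontrivial (Mᶜ : Set V) := ⟨⟨⟨x, hx⟩, ⟨y, hy⟩, by simpa using hxy⟩⟩
  obtain ⟨z, hz⟩ := hM.2.exists_adj_of_nontrivial ⟨x, hx⟩
  exact ⟨z, z.2, hz⟩

variable [Fintype V] [DecidableEq V] [DecidableRel G.Adj] {s : Finset V}

lemma exists_adj_notMem (hs : IsWCS G s) (hcard : G.maxDegree + 2 ≤ #s) {u : V}
    (hu : u ∈ s) : ∃ x ∉ (s : Set V), G.Adj u x := by
  have hsub : ¬ s ⊆ insert u (G.neighborFinset u) := fun h => by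
    have := (card_le_card h).trans (card_insert_le _ _)
    have := G.degree_le_maxDegree u
    rw [G.card_neighborFinset_eq_degree] at *
    omega
  obtain ⟨v, hv, hv'⟩ := not_subset.mp hsub
  simp only [mem_insert, SimpleGraph.mem_neighborFinset, not_or] at hv'
  exact hs.exists_adj_notMem_of_not_adj hu hv (Ne.symm hv'.1) hv'.2

lemma one_lt_card_compl (hs : IsWCS G s) (hcard : G.maxDegree + 2 ≤ #s) : 1 < #sᶜ := by
  obtain ⟨u, hu⟩ : s.Nonempty := card_pos.mp (by omega)
  obtain ⟨x, hx, -⟩ := hs.exists_adj_notMem hcard hu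
  have hx : x ∈ sᶜ := by simpa using hx
  by_contra! hle
  have hsub : s ⊆ G.neighborFinset x := fun w hw => by
    obtain ⟨z, hz, hwz⟩ := hs.exists_adj_notMem hcard hw
    rw [card_le_one.mp hle z (by simpa using hz) x hx] at hwz
    exact (G.mem_neighborFinset _ _).mpr hwz.symm
  have := (card_le_card hsub).trans_eq (G.card_neighborFinset_eq_degree x)
  have := G.degree_le_maxDegree x
  omega

lemma card_filter_adj_le (hs : IsWCS G s) (hcompl : 1 < #sᶜ) {x : V} (hx : x ∉ s) :
    #{u ∈ s | G.Adj u x} ≤ G.maxDegree - 1 := by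
  obtain ⟨y, hy, hyx⟩ := exists_mem_ne hcompl x
  obtain ⟨z, hz, hxz⟩ := hs.exists_adj_notMem_of_notMem (by simpa using hx) (by simpa using hy)
    (Ne.symm hyx)
  have hsub : {u ∈ s | G.Adj u x} ⊆ (G.neighborFinset x).erase z := fun u hu => by
    simp only [mem_filter] at hu
    exact mem_erase.mpr ⟨fun h => hz (h ▸ hu.1), (G.mem_neighborFinset _ _).mpr hu.2.symm⟩
  have := card_le_card hsub
  rw [card_erase_of_mem ((G.mem_neighborFinset _ _).mpr hxz),
    G.card_neighborFinset_eq_degree] at this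
  have := G.degree_le_maxDegree x
  omega

lemma card_le_mul_card_compl (hs : IsWCS G s) (hcard : G.maxDegree + 2 ≤ #s) :
    #s ≤ #sᶜ * (G.maxDegree - 1) := by
  have hcompl := hs.one_lt_card_compl hcard
  simpa using card_mul_le_card_mul G.Adj (m := 1) (s := s) (t := sᶜ)
    (fun u hu => by
      obtain ⟨x, hx, hux⟩ := hs.exists_adj_notMem hcard hu
      exact card_pos.mpr ⟨x, by simpa [mem_bipartiteAbove] using ⟨hx, hux⟩⟩)
    (fun x hx => hs.card_filter_adj_le hcompl (mem_compl.mp hx))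

end IsWCS

lemma le_div_mul_add_of_le_mul_sub_one {m c d : ℕ} (hm : 0 < m) (h : m ≤ c * (d - 1)) :
    (m : ℝ) ≤ ((d : ℝ) - 1) / d * (m + c) := by
  have hd : 1 ≤ d := Nat.pos_of_ne_zero (by rintro rfl; omega)
  have h' : (m : ℝ) ≤ c * ((d : ℝ) - 1) := by
    rw [← Nat.cast_one, ← Nat.cast_sub hd]; exact_mod_cast h
  have hd' : (1 : ℝ) ≤ d := by exact_mod_cast hd
  rw [div_mul_eq_mul_div, le_div_iff₀ (by linarith)]
  nlinarith

theorem wcs_upper_bound_general {V : Type*} [Fintype V] (G : SimpleGraph V)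
    [DecidableRel G.Adj]
    (M : Set V) (hM : IsWCS G M) :
    (Nat.card M : ℝ) ≤
      max (((G.maxDegree : ℝ) - 1) / (G.maxDegree : ℝ) * (Fintype.card V : ℝ))
        ((G.maxDegree : ℝ) + 1) := by
  classical
  obtain ⟨s, rfl⟩ := M.toFinite.exists_finset_coe
  rw [Nat.card_coe_set_eq, Set.ncard_coe_finset]
  by_cases hsmall : #s ≤ G.maxDegree + 1
  · exact le_max_of_le_right (by exact_mod_cast hsmall)
  refine le_max_of_le_left ?_
  rw [← card_add_card_compl s, Nat.cast_add]
  exact le_div_mul_add_of_le_mul_sub_one (by omega) (hM.card_le_mul_card_compl (by omega))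

/-- In a connected graph with at least two vertices and maximum degree `Δ`,
every well-connected set `M` satisfies `|M| ≤ max (((Δ-1)/Δ)·|V|) (Δ+1)`. -/
theorem wcs_upper_bound {V : Type*} [Fintype V] (G : SimpleGraph V)
    [DecidableRel G.Adj] (hG : G.Connected) (hV : 2 ≤ Fintype.card V)
    (M : Set V) (hM : IsWCS G M) :
    (Nat.card M : ℝ) ≤
      max (((G.maxDegree : ℝ) - 1) / (G.maxDegree : ℝ) * (Fintype.card V : ℝ))
        ((G.maxDegree : ℝ) + 1) :=
  wcs_upper_bound_general G M hM
end

section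
/- Let T=(V,E) be a finite tree with at least 3 vertices, and let W ⊆ V be the set of its degree-one vertices (leaves). Then every well-connected set M of T satisfies |M| ≤ |W|; hence W is a largest well-connected set of T. -/
set_option linter.unusedSectionVars false
set_option maxHeartbeats 1000000

open SimpleGraph Walk

section Aux

variable {V : Type*} [DecidableEq V] {T : SimpleGraph V}

lemma tree_path_eq (hT : T.IsTree) {u v : V} {p q : T.Walk u v}
    (hp : p.IsPath) (hq : q.IsPath) : p = q :=
  Subtype.ext_iff.mp (hT.IsAcyclic.path_unique ⟨p, hp⟩ ⟨q, hq⟩)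

lemma tree_length_eq_dist (hT : T.IsTree) {u v : V} {p : T.Walk u v} (hp : p.IsPath) :
    p.length = T.dist u v := by
  obtain ⟨q, hq, hql⟩ := (hT.isConnected.preconnected u v).exists_path_of_dist
  rw [tree_path_eq hT hp hq, hql]

lemma claimA (hT : T.IsTree) {m a b : V} (ha : T.Adj m a) (hb : T.Adj m b)
    (hab : a ≠ b) (w : T.Walk a b) (hm : m ∉ w.support) : False := by
  have hq : m ∉ (w.toPath : T.Walk a b).support := fun h => hm (w.support_toPath_subset h)
  have hp1 : (Walk.cons ha (w.toPath : T.Walk a b)).IsPath :=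
    (Walk.cons_isPath_iff _ _).mpr ⟨w.toPath.2, hq⟩
  have hp2 : (Walk.cons hb Walk.nil).IsPath := by simp [hb.ne]
  have := congrArg Walk.length (tree_path_eq hT hp1 hp2)
  simp only [Walk.length_cons, Walk.length_nil] at this
  exact hab (Walk.eq_of_length_eq_zero (p := (w.toPath : T.Walk a b)) (by omega))

lemma tree_degree_pos [Fintype V] [DecidableRel T.Adj] (hT : T.IsTree)
    (hV : 2 ≤ Fintype.card V) (v : V) : 0 < T.degree v := by
  obtain ⟨u, hu⟩ := Fintype.exists_ne_of_one_lt_card (by omega) v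
  obtain ⟨w⟩ := hT.isConnected.preconnected v u
  obtain ⟨x, hx, -, -⟩ := w.exists_eq_cons_of_ne (Ne.symm hu)
  exact T.degree_pos_iff_exists_adj v |>.mpr ⟨x, hx⟩

lemma internal_two_le_degree [Fintype V] [DecidableRel T.Adj] {u v w : V}
    {p : T.Walk u v} (hp : p.IsPath) (hw : w ∈ p.support) (hwu : w ≠ u) (hwv : w ≠ v) :
    2 ≤ T.degree w := by
  have hspec : (p.takeUntil w hw).append (p.dropUntil w hw) = p := p.take_spec hw
  have ht : (p.takeUntil w hw).IsPath := hp.takeUntil hw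
  have hd : (p.dropUntil w hw).IsPath := hp.dropUntil hw
  obtain ⟨x, hwx, tx, htx⟩ := (p.takeUntil w hw).reverse.exists_eq_cons_of_ne hwu
  obtain ⟨y, hwy, dy, hdy⟩ := (p.dropUntil w hw).exists_eq_cons_of_ne hwv
  have hxt : x ∈ (p.takeUntil w hw).support := by
    have : x ∈ (p.takeUntil w hw).reverse.support := by
      rw [htx]; simp [Walk.support_cons]
    rwa [Walk.support_reverse, List.mem_reverse] at this
  have hyd : y ∈ (p.dropUntil w hw).support.tail := by
    rw [hdy]; simp [Walk.support_cons]
  have hnd : (((p.takeUntil w hw).support) ++ ((p.dropUntil w hw).support.tail)).Nodup := by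
    rw [← Walk.support_append, hspec]; exact hp.support_nodup
  have hxy : x ≠ y := by
    intro h
    exact (List.disjoint_of_nodup_append hnd) hxt (h ▸ hyd)
  have hsub : ({x, y} : Finset V) ⊆ T.neighborFinset w := by
    intro z hz
    rw [SimpleGraph.mem_neighborFinset]
    rcases Finset.mem_insert.mp hz with rfl | hz
    · exact hwx
    · rw [Finset.mem_singleton.mp hz]; exact hwy
  calc 2 = ({x, y} : Finset V).card := (Finset.card_pair hxy).symm
    _ ≤ (T.neighborFinset w).card := Finset.card_le_card hsub
    _ = T.degree w := rfl

lemma reach_induce {s : Set V} : ∀ {a b : V} (p : T.Walk a b) (hs : ∀ w ∈ p.support, w ∈ s),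
    (T.induce s).Reachable ⟨a, hs a p.start_mem_support⟩ ⟨b, hs b p.end_mem_support⟩ := by
  intro a b p
  induction p with
  | nil => intro hs; exact Reachable.refl _
  | @cons a c b h q ih =>
    intro hs
    have hs' : ∀ w ∈ q.support, w ∈ s := fun w hw => hs w (by simp [Walk.support_cons, hw])
    have h1 : (T.induce s).Adj ⟨a, hs a (Walk.cons h q).start_mem_support⟩
        ⟨c, hs' c q.start_mem_support⟩ := by
      simp only [SimpleGraph.comap_adj, Function.Embedding.coe_subtype]
      exact h
    exact h1.reachable.trans (ih hs')

lemma exists_leaf [Fintype V] [DecidableRel T.Adj] (hT : T.IsTree) (m x : V) (hx : x ≠ m) :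
    ∃ l, T.degree l = 1 ∧ ∃ p : T.Walk x l, m ∉ p.support := by
  classical
  let S : Finset V := Finset.univ.filter fun y => y ≠ m ∧ ∃ p : T.Walk x y, m ∉ p.support
  have hxS : x ∈ S := by
    simp only [S, Finset.mem_filter, Finset.mem_univ, true_and]
    exact ⟨hx, Walk.nil, by simp; exact Ne.symm hx⟩
  obtain ⟨l, hlS, hmax⟩ := S.exists_max_image (fun y => T.dist m y) ⟨x, hxS⟩
  rw [Finset.mem_filter] at hlS
  obtain ⟨-, hlm, p0, hp0⟩ := hlS
  obtain ⟨P, hP, hPd⟩ := (hT.isConnected.preconnected m l).exists_path_of_dist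
  obtain ⟨z, hlz, q, hq⟩ := P.reverse.exists_eq_cons_of_ne hlm
  have hPrev : P.reverse.IsPath := hP.reverse
  rw [hq, Walk.cons_isPath_iff] at hPrev
  obtain ⟨hqP, hlq⟩ := hPrev
  have hnb : ∀ y, T.Adj l y → y = z := by
    intro y hy
    by_cases hys : y ∈ P.support
    · by_contra hyz
      have hyq : y ∈ q.support := by
        have : y ∈ P.reverse.support := by rwa [Walk.support_reverse, List.mem_reverse]
        rw [hq, Walk.support_cons, List.mem_cons] at this
        rcases this with h | h
        · exact absurd h hy.ne'
        · exact h
      have hA : (Walk.cons hlz (q.takeUntil y hyq)).IsPath := by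
        rw [Walk.cons_isPath_iff]
        exact ⟨hqP.takeUntil hyq, fun h => hlq (q.support_takeUntil_subset hyq h)⟩
      have hB : (Walk.cons hy Walk.nil).IsPath := by simp [hy.ne]
      have := congrArg Walk.length (tree_path_eq hT hA hB)
      simp only [Walk.length_cons, Walk.length_nil] at this
      exact hyz (Walk.eq_of_length_eq_zero (p := q.takeUntil y hyq) (by omega)).symm
    · exfalso
      have hym : y ≠ m := fun h => hys (h ▸ P.start_mem_support)
      have hR : (Walk.cons hy.symm P.reverse).IsPath := by
        rw [Walk.cons_isPath_iff, Walk.support_reverse]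
        exact ⟨hP.reverse, fun h => hys (List.mem_reverse.mp h)⟩
      have hdy : T.dist y m = P.length + 1 := by
        have := tree_length_eq_dist hT hR
        simpa using this.symm
      have hyS : y ∈ S := by
        simp only [S, Finset.mem_filter, Finset.mem_univ, true_and]
        refine ⟨hym, p0.append (Walk.cons hy Walk.nil), ?_⟩
        rw [Walk.mem_support_append_iff]
        rintro (h | h)
        · exact hp0 h
        · simp only [Walk.support_cons, Walk.support_nil, List.mem_cons, List.mem_singleton] at h
          rcases h with h | h
          · exact hlm h.symm
          · simp at h; exact hym h.symm
      have h1 := hmax y hyS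
      rw [SimpleGraph.dist_comm] at hdy
      rw [hdy, hPd] at h1
      omega
  have hdeg : T.neighborFinset l = {z} := by
    apply Finset.eq_singleton_iff_unique_mem.mpr
    exact ⟨(SimpleGraph.mem_neighborFinset _ _ _).mpr hlz,
      fun y hy => hnb y ((SimpleGraph.mem_neighborFinset _ _ _).mp hy)⟩
  refine ⟨l, ?_, p0, hp0⟩
  show (T.neighborFinset l).card = 1
  rw [hdeg, Finset.card_singleton]

end Aux



/-- In a finite tree with at least three vertices, every well-connected set has
cardinality at most the number of leaves; hence the set `W` of leaves (which is a
well-connected set) is a largest well-connected set. -/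
theorem leaves_largest_wcs_of_tree {V : Type*} [Fintype V] (T : SimpleGraph V)
    [DecidableRel T.Adj] (hT : T.IsTree) (hV : 3 ≤ Fintype.card V) :
    (∀ M : Set V, IsWCS T M → Nat.card M ≤ Nat.card {v : V | T.degree v = 1}) ∧
    IsWCS T {v : V | T.degree v = 1} := by
  classical
  set W : Set V := {v : V | T.degree v = 1} with hWdef
  have hpre := hT.isConnected.preconnected
  constructor
  · rintro M ⟨hM1, hM2⟩
    -- walks inside the complement of M
    have c2 : ∀ u ∈ Mᶜ, ∀ v ∈ Mᶜ, ∃ p : T.Walk u v, ∀ z ∈ p.support, z ∈ Mᶜ := by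
      intro u hu v hv
      obtain ⟨q⟩ := hM2 ⟨u, hu⟩ ⟨v, hv⟩
      refine ⟨q.map (SimpleGraph.Embedding.induce Mᶜ).toHom, ?_⟩
      intro z hz
      replace hz : z ∈ q.support.map (SimpleGraph.Embedding.induce (G := T) Mᶜ).toHom := by
        rw [← Walk.support_map]; exact hz
      obtain ⟨z', _, rfl⟩ := List.mem_map.mp hz
      exact z'.2
    -- walks between members of M avoiding a third member
    have c1 : ∀ m ∈ M, ∀ u ∈ M, ∀ v ∈ M, u ≠ m → v ≠ m →
        ∃ p : T.Walk u v, m ∉ p.support := by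
      intro m hm u hu v hv hum hvm
      rcases eq_or_ne u v with rfl | huv
      · exact ⟨Walk.nil, by simp; exact Ne.symm hum⟩
      · obtain ⟨p, hp⟩ := hM1 u hu v hv huv
        refine ⟨p, fun hmp => ?_⟩
        rcases hp m hmp hm with rfl | rfl
        · exact hum rfl
        · exact hvm rfl
    -- structure of a non-leaf member of M
    have struct : ∀ m ∈ M, T.degree m ≠ 1 →
        (∃ a, T.Adj m a ∧ a ∈ M) ∧ (∃ b, T.Adj m b ∧ b ∈ Mᶜ) := by
      intro m hm hdm
      have h2 : 1 < T.degree m := by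
        have := tree_degree_pos hT (by omega) m
        omega
      rw [show T.degree m = (T.neighborFinset m).card from rfl, Finset.one_lt_card] at h2
      obtain ⟨n₁, hn₁, n₂, hn₂, hnn⟩ := h2
      rw [SimpleGraph.mem_neighborFinset] at hn₁ hn₂
      have key : ∀ x y, T.Adj m x → T.Adj m y → x ≠ y → x ∈ M → y ∈ M → False := by
        intro x y hx hy hxy hxM hyM
        obtain ⟨w, hw⟩ := c1 m hm x hxM y hyM hx.ne' hy.ne'
        exact claimA hT hx hy hxy w hw
      have key' : ∀ x y, T.Adj m x → T.Adj m y → x ≠ y → x ∈ Mᶜ → y ∈ Mᶜ → False := by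
        intro x y hx hy hxy hxM hyM
        obtain ⟨w, hw⟩ := c2 x hxM y hyM
        exact claimA hT hx hy hxy w (fun h => (hw m h) hm)
      by_cases h1 : n₁ ∈ M <;> by_cases h2 : n₂ ∈ M
      · exact absurd (key n₁ n₂ hn₁ hn₂ hnn h1 h2) (not_false)
      · exact ⟨⟨n₁, hn₁, h1⟩, ⟨n₂, hn₂, h2⟩⟩
      · exact ⟨⟨n₂, hn₂, h2⟩, ⟨n₁, hn₁, h1⟩⟩
      · exact absurd (key' n₁ n₂ hn₁ hn₂ hnn h1 h2) (not_false)
    -- at most one non-leaf in M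
    have hsub : (M \ W).Subsingleton := by
      intro m hm m' hm'
      by_contra hne
      obtain ⟨⟨a, haA, haM⟩, ⟨b, hbA, hbM⟩⟩ := struct m hm.1 hm.2
      obtain ⟨⟨a', ha'A, ha'M⟩, ⟨b', hb'A, hb'M⟩⟩ := struct m' hm'.1 hm'.2
      obtain ⟨w0, hw0⟩ := hM1 m hm.1 m' hm'.1 hne
      have hp : (w0.toPath : T.Walk m m').IsPath := w0.toPath.2
      have hint : ∀ z ∈ (w0.toPath : T.Walk m m').support, z ∈ M → z = m ∨ z = m' :=
        fun z hz => hw0 z (w0.support_toPath_subset hz)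
      have hnadj : ¬ T.Adj m m' := by
        intro hadj
        obtain ⟨r0, hr0⟩ := c2 b hbM b' hb'M
        have hr0' : ∀ z ∈ (r0.toPath : T.Walk b b').support, z ∈ Mᶜ :=
          fun z hz => hr0 z (r0.support_toPath_subset hz)
        have hm'r : m' ∉ (r0.toPath : T.Walk b b').support := fun h => (hr0' m' h) hm'.1
        have hmr : m ∉ (r0.toPath : T.Walk b b').support := fun h => (hr0' m h) hm.1
        have hs1 : (Walk.cons hb'A (r0.toPath : T.Walk b b').reverse).IsPath := by
          rw [Walk.cons_isPath_iff, Walk.support_reverse]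
          exact ⟨r0.toPath.2.reverse, fun h => hm'r (List.mem_reverse.mp h)⟩
        have hQ : (Walk.cons hbA (Walk.cons hb'A
            (r0.toPath : T.Walk b b').reverse).reverse).IsPath := by
          rw [Walk.cons_isPath_iff]
          refine ⟨hs1.reverse, ?_⟩
          rw [Walk.support_reverse, List.mem_reverse, Walk.support_cons, List.mem_cons]
          rintro (h | h)
          · exact hne h
          · rw [Walk.support_reverse, List.mem_reverse] at h; exact hmr h
        have hE : (Walk.cons hadj Walk.nil).IsPath := by simp [hadj.ne]
        have := congrArg Walk.length (tree_path_eq hT hQ hE)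
        simp only [Walk.length_cons, Walk.length_nil, Walk.length_reverse] at this
        omega
      -- now the path from m to m' has length ≥ 2
      obtain ⟨y, hy, q, hq⟩ := (w0.toPath : T.Walk m m').reverse.exists_eq_cons_of_ne
        (Ne.symm hne)
      have hPrev : (w0.toPath : T.Walk m m').reverse.IsPath := hp.reverse
      rw [hq, Walk.cons_isPath_iff] at hPrev
      obtain ⟨hqP, hm'q⟩ := hPrev
      have hym : y ≠ m := by
        rintro rfl
        exact hnadj hy.symm
      have hyM : y ∈ Mᶜ := by
        intro hyMem
        have hys : y ∈ (w0.toPath : T.Walk m m').support := by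
          rw [← List.mem_reverse, ← Walk.support_reverse, hq, Walk.support_cons]
          exact List.mem_cons.mpr (Or.inr q.start_mem_support)
        rcases hint y hys hyMem with rfl | rfl
        · exact hym rfl
        · exact hy.ne' rfl
      have ha'm : a' ≠ m := by
        rintro rfl
        exact hnadj ha'A.symm
      obtain ⟨w1, hw1⟩ := c1 m' hm'.1 a' ha'M m hm.1 ha'A.ne' hne
      have hqrev : m' ∉ q.reverse.support := by
        rw [Walk.support_reverse, List.mem_reverse]; exact hm'q
      have ha'y : a' ≠ y := fun h => hyM (h ▸ ha'M)
      refine claimA hT ha'A hy ha'y (w1.append q.reverse) ?_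
      rw [Walk.mem_support_append_iff]
      rintro (h | h)
      · exact hw1 h
      · exact hqrev h
    -- find a leaf outside M when M contains a non-leaf
    rcases Set.eq_empty_or_nonempty (M \ W) with hMW | ⟨m, hm⟩
    · have hMsubW : M ⊆ W := by
        intro v hv
        by_contra h
        exact absurd (Set.mem_diff v |>.mpr ⟨hv, h⟩) (hMW ▸ Set.notMem_empty v)
      rw [Nat.card_coe_set_eq, Nat.card_coe_set_eq]
      exact Set.ncard_le_ncard hMsubW (Set.toFinite W)
    · obtain ⟨⟨a, haA, haM⟩, ⟨b, hbA, hbM⟩⟩ := struct m hm.1 hm.2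
      obtain ⟨l, hl1, pl, hpl⟩ := exists_leaf hT m b hbA.ne'
      have hab : a ≠ b := fun h => hbM (h ▸ haM)
      have hlM : l ∉ M := by
        intro hlM
        have hlm : l ≠ m := fun h => hpl (h ▸ pl.end_mem_support)
        by_cases hal : a = l
        · subst hal
          refine claimA hT haA hbA hab pl.reverse ?_
          rw [Walk.support_reverse, List.mem_reverse]; exact hpl
        · obtain ⟨w1, hw1⟩ := c1 m hm.1 a haM l hlM haA.ne' hlm
          refine claimA hT haA hbA hab (w1.append pl.reverse) ?_
          rw [Walk.mem_support_append_iff]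
          rintro (h | h)
          · exact hw1 h
          · rw [Walk.support_reverse, List.mem_reverse] at h; exact hpl h
      have hlW : l ∈ W := hl1
      have key : M = insert m (M ∩ W) := by
        ext v
        constructor
        · intro hv
          by_cases hvW : v ∈ W
          · exact Or.inr ⟨hv, hvW⟩
          · exact Or.inl (hsub ⟨hv, hvW⟩ hm)
        · rintro (rfl | ⟨h, -⟩)
          · exact hm.1
          · exact h
      rw [Nat.card_coe_set_eq, Nat.card_coe_set_eq, key,
        Set.ncard_insert_of_notMem (fun h => hm.2 h.2) (Set.toFinite _)]
      have h2 : insert l (M ∩ W) ⊆ W := by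
        rintro v hv
        rcases Set.mem_insert_iff.mp hv with rfl | ⟨-, h⟩
        · exact hlW
        · exact h
      have h3 := Set.ncard_le_ncard h2 (Set.toFinite W)
      rw [Set.ncard_insert_of_notMem (fun h => hlM h.1) (Set.toFinite _)] at h3
      omega
  · constructor
    · intro u hu v hv huv
      obtain ⟨w⟩ := hpre u v
      refine ⟨(w.toPath : T.Walk u v), ?_⟩
      intro z hz hzW
      by_contra hcon
      push_neg at hcon
      have := internal_two_le_degree w.toPath.2 hz hcon.1 hcon.2
      have hz1 : T.degree z = 1 := hzW
      omega
    · intro u v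
      obtain ⟨w⟩ := hpre u.1 v.1
      have hsupp : ∀ z ∈ (w.toPath : T.Walk u.1 v.1).support, z ∈ Wᶜ := by
        intro z hz
        by_cases hzu : z = u.1
        · exact hzu ▸ u.2
        by_cases hzv : z = v.1
        · exact hzv ▸ v.2
        have := internal_two_le_degree w.toPath.2 hz hzu hzv
        intro hzW
        have hz1 : T.degree z = 1 := hzW
        omega
      exact reach_induce (w.toPath : T.Walk u.1 v.1) hsupp
end

section
/- Let B(U,V) be the complete bipartite graph with parts U and V, where |U| = a ≥ 2 and |V| = b ≥ 2. Then for any subsets U' ⊆ U with |U'| = a − 1 and V' ⊆ V with |V'| = b − 1, the set M = U' ∪ V' is a well-connected set of B(U,V), of size a + b − 2. -/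
theorem Set.nonempty_compl_of_natCard_lt {α : Type*} {s : Set α} (h : Nat.card s < Nat.card α) :
    sᶜ.Nonempty := by
  rw [Set.nonempty_compl]
  rintro rfl
  simp at h

theorem isWCS_of_exists_walk_support_subset {V : Type*} {G : SimpleGraph V} {M S : Set V}
    (hSM : Disjoint S M)
    (hwalk : ∀ u v, ∃ p : G.Walk u v, ∀ w ∈ p.support, w = u ∨ w = v ∨ w ∈ S) :
    IsWCS G M := by
  refine ⟨fun u _ v _ _ ↦ ?_, fun ⟨u, hu⟩ ⟨v, hv⟩ ↦ ?_⟩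
  · obtain ⟨p, hp⟩ := hwalk u v
    refine ⟨p, fun w hw hwM ↦ ?_⟩
    rcases hp w hw with rfl | rfl | hwS
    exacts [Or.inl rfl, Or.inr rfl, absurd hwM (hSM.notMem_of_mem_left hwS)]
  · obtain ⟨p, hp⟩ := hwalk u v
    refine ⟨p.induce Mᶜ fun w hw ↦ ?_⟩
    rcases hp w hw with rfl | rfl | hwS
    exacts [hu, hv, hSM.notMem_of_mem_left hwS]

section CompleteBipartite

variable {α β : Type*}

theorem completeBipartiteGraph_exists_walk_support_subset (a₀ : α) (b₀ : β) (u v : α ⊕ β) :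
    ∃ p : (completeBipartiteGraph α β).Walk u v, ∀ w ∈ p.support,
      w = u ∨ w = v ∨ w ∈ ({Sum.inl a₀, Sum.inr b₀} : Set (α ⊕ β)) := by
  have adj (x : α) (y : β) : (completeBipartiteGraph α β).Adj (.inl x) (.inr y) := by simp
  rcases u with x | y <;> rcases v with x' | y'
  · exact ⟨.cons (adj x b₀) (.cons (adj x' b₀).symm .nil), by simp⟩
  · exact ⟨.cons (adj x y') .nil, by simp⟩
  · exact ⟨.cons (adj x' y).symm .nil, by simp⟩
  · exact ⟨.cons (adj a₀ y).symm (.cons (adj a₀ y') .nil), by simp⟩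

theorem isWCS_completeBipartiteGraph {U' : Set α} {W' : Set β} (hU' : U'ᶜ.Nonempty)
    (hW' : W'ᶜ.Nonempty) :
    IsWCS (completeBipartiteGraph α β) (Sum.inl '' U' ∪ Sum.inr '' W') := by
  obtain ⟨a₀, ha₀⟩ := hU'
  obtain ⟨b₀, hb₀⟩ := hW'
  refine isWCS_of_exists_walk_support_subset (S := {.inl a₀, .inr b₀}) ?_
    (completeBipartiteGraph_exists_walk_support_subset a₀ b₀)
  simp_all [Set.disjoint_insert_left]

theorem Nat.card_image_inl_union_image_inr [Finite α] [Finite β] (U' : Set α) (W' : Set β) :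
    Nat.card (Sum.inl '' U' ∪ Sum.inr '' W' : Set (α ⊕ β)) = Nat.card U' + Nat.card W' := by
  simp only [Nat.card_coe_set_eq]
  rw [Set.ncard_union_eq Set.disjoint_image_inl_image_inr,
    Set.ncard_image_of_injective _ Sum.inl_injective,
    Set.ncard_image_of_injective _ Sum.inr_injective]

end CompleteBipartite

/-- In the complete bipartite graph with parts `U` of size `a ≥ 2` and `W` of size
`b ≥ 2`, for any `U' ⊆ U` with `|U'| = a - 1` and `W' ⊆ W` with `|W'| = b - 1`, the set
`M = U' ∪ W'` is a well-connected set of size `a + b - 2`. -/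
theorem complete_bipartite_wcs {α β : Type*} [Fintype α] [Fintype β]
    (ha : 2 ≤ Fintype.card α) (hb : 2 ≤ Fintype.card β)
    (U' : Set α) (W' : Set β)
    (hU' : Nat.card U' = Fintype.card α - 1) (hW' : Nat.card W' = Fintype.card β - 1) :
    IsWCS (completeBipartiteGraph α β) (Sum.inl '' U' ∪ Sum.inr '' W') ∧
    Nat.card (Sum.inl '' U' ∪ Sum.inr '' W' : Set (α ⊕ β)) =
      Fintype.card α + Fintype.card β - 2 := by
  have hU'c : U'ᶜ.Nonempty := Set.nonempty_compl_of_natCard_lt (by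
    rw [hU', Nat.card_eq_fintype_card]; omega)
  have hW'c : W'ᶜ.Nonempty := Set.nonempty_compl_of_natCard_lt (by
    rw [hW', Nat.card_eq_fintype_card]; omega)
  refine ⟨isWCS_completeBipartiteGraph hU'c hW'c, ?_⟩
  rw [Nat.card_image_inl_union_image_inr, hU', hW']
  omega
end

section
/- Let G=(V,E) be a connected simple graph and consider an MRPP instance with n robots having pairwise-distinct start vertices s_1,…,s_n and pairwise-distinct goal vertices g_1,…,g_n. Suppose the instance is well-formed: for every robot i there exists a path in G from s_i to g_i that does not pass through any vertex of {s_j : j ≠ i} ∪ {g_j : j ≠ i}. Then the instance is solvable: there exist a time horizon T ∈ ℕ and trajectories p_i : {0,1,…,T} → V for i = 1,…,n such that p_i(0) = s_i, p_i(T) = g_i, for every t the vertex p_i(t+1) equals p_i(t) or is adjacent to p_i(t) in G, no two robots occupy the same vertex at the same time step (p_i(t) ≠ p_j(t) for all i ≠ j and all t), and no two robots swap along an edge in the same step (there are no i ≠ j and t with p_i(t+1) = p_j(t) and p_j(t+1) = p_i(t)). -/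
/-!
Let the robots move one at a time, in index order: robot `i` waits at its start until
robots `0, …, i - 1` have reached their goals, then follows its well-formed walk to its
goal and stays there. At any moment any two robots `i < j` are such that `j` still sits
at its start or `i` already sits at its goal, and the walk of the other robot avoids
exactly these vertices, so neither collisions nor swaps can occur.
-/

/-- `p` (defined on time steps `0, …, T`) is a solution of the multi-robot path
planning instance on `G` with start vertices `s` and goal vertices `g`: every robot
starts at its start, ends at its goal, at each step stays put or moves along an edge
of `G`, no two robots occupy the same vertex at the same time step, and no two robots
swap along an edge in the same step. -/
def IsMRPPSolution {V : Type*} (G : SimpleGraph V) {n : ℕ} (s g : Fin n → V)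
    (T : ℕ) (p : Fin n → ℕ → V) : Prop :=
  (∀ i, p i 0 = s i) ∧ (∀ i, p i T = g i) ∧
  (∀ i, ∀ t < T, p i (t + 1) = p i t ∨ G.Adj (p i t) (p i (t + 1))) ∧
  (∀ i j, i ≠ j → ∀ t ≤ T, p i t ≠ p j t) ∧
  (∀ i j, i ≠ j → ∀ t < T, ¬ (p i (t + 1) = p j t ∧ p j (t + 1) = p i t))

open Finset

namespace SimpleGraph.Walk

variable {V : Type*} {G : SimpleGraph V} {u v : V}

theorem getVert_succ_eq_or_adj (q : G.Walk u v) (k : ℕ) :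
    q.getVert (k + 1) = q.getVert k ∨ G.Adj (q.getVert k) (q.getVert (k + 1)) := by
  rcases lt_or_ge k q.length with hk | hk
  · exact .inr (q.adj_getVert_succ hk)
  · exact .inl (by rw [q.getVert_of_length_le hk, q.getVert_of_length_le (by omega)])

theorem getVert_succ_sub_eq_or_adj (q : G.Walk u v) (t d : ℕ) :
    q.getVert (t + 1 - d) = q.getVert (t - d) ∨
      G.Adj (q.getVert (t - d)) (q.getVert (t + 1 - d)) := by
  rcases lt_or_ge t d with ht | ht
  · exact .inl (by rw [Nat.sub_eq_zero_of_le ht, Nat.sub_eq_zero_of_le (by omega)])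
  · rw [Nat.sub_add_comm ht]
    exact q.getVert_succ_eq_or_adj _

end SimpleGraph.Walk

section SequentialPlan

variable {V : Type*} {G : SimpleGraph V} {n : ℕ} {s g : Fin n → V}
  (Q : ∀ i, G.Walk (s i) (g i))

def departureTime (i : Fin n) : ℕ :=
  ∑ j ∈ Iio i, (Q j).length

def AvoidsOtherEndpoints : Prop :=
  ∀ i, ∀ w ∈ (Q i).support, ∀ j, j ≠ i → w ≠ s j ∧ w ≠ g j

def sequentialPlan (i : Fin n) (t : ℕ) : V :=
  (Q i).getVert (t - departureTime Q i)

theorem sequentialPlan_mem_support (i : Fin n) (t : ℕ) :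
    sequentialPlan Q i t ∈ (Q i).support :=
  (Q i).getVert_mem_support _

theorem sequentialPlan_of_le_departureTime {i : Fin n} {t : ℕ}
    (ht : t ≤ departureTime Q i) : sequentialPlan Q i t = s i := by
  rw [sequentialPlan, Nat.sub_eq_zero_of_le ht, SimpleGraph.Walk.getVert_zero]

theorem sequentialPlan_of_arrival_le {i : Fin n} {t : ℕ}
    (ht : ∑ j ∈ Iic i, (Q j).length ≤ t) : sequentialPlan Q i t = g i := by
  rw [← sum_Iio_add_eq_sum_Iic] at ht
  exact (Q i).getVert_of_length_le (by rw [departureTime]; omega)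

theorem sequentialPlan_eq_start_or_eq_goal {i j : Fin n} (hij : i < j) (t : ℕ) :
    sequentialPlan Q j t = s j ∨ sequentialPlan Q i t = g i := by
  rcases le_or_gt t (departureTime Q j) with ht | ht
  · exact .inl (sequentialPlan_of_le_departureTime Q ht)
  · have harrival : ∑ k ∈ Iic i, (Q k).length ≤ departureTime Q j :=
      sum_le_sum_of_subset fun k hk => mem_Iio.2 ((mem_Iic.1 hk).trans_lt hij)
    exact .inr (sequentialPlan_of_arrival_le Q (by omega))

variable {Q}

theorem sequentialPlan_ne_of_lt (hQ : AvoidsOtherEndpoints Q) {i j : Fin n}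
    (hij : i < j) (t : ℕ) :
    sequentialPlan Q i t ≠ sequentialPlan Q j t := by
  intro hij_eq
  rcases sequentialPlan_eq_start_or_eq_goal Q hij t with hj | hi
  · exact (hQ i _ (sequentialPlan_mem_support Q i t) j hij.ne').1 (hij_eq.trans hj)
  · exact (hQ j _ (sequentialPlan_mem_support Q j t) i hij.ne).2 (hij_eq.symm.trans hi)

theorem sequentialPlan_not_swap_of_lt (hQ : AvoidsOtherEndpoints Q) {i j : Fin n}
    (hij : i < j) (t : ℕ) :
    ¬ (sequentialPlan Q i (t + 1) = sequentialPlan Q j t ∧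
      sequentialPlan Q j (t + 1) = sequentialPlan Q i t) := by
  rintro ⟨hi_next, hj_next⟩
  rcases sequentialPlan_eq_start_or_eq_goal Q hij t with hj | hi
  · exact (hQ i _ (sequentialPlan_mem_support Q i _) j hij.ne').1 (hi_next.trans hj)
  · exact (hQ j _ (sequentialPlan_mem_support Q j _) i hij.ne).2 (hj_next.trans hi)

theorem isMRPPSolution_sequentialPlan (hQ : AvoidsOtherEndpoints Q) :
    IsMRPPSolution G s g (∑ j, (Q j).length) (sequentialPlan Q) := by
  refine ⟨fun i => sequentialPlan_of_le_departureTime Q (Nat.zero_le _),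
    fun i => sequentialPlan_of_arrival_le Q (sum_le_sum_of_subset (subset_univ _)),
    fun i t _ => (Q i).getVert_succ_sub_eq_or_adj t _, ?_, ?_⟩
  · intro i j hij t _
    rcases hij.lt_or_gt with h | h
    · exact sequentialPlan_ne_of_lt hQ h t
    · exact (sequentialPlan_ne_of_lt hQ h t).symm
  · intro i j hij t _
    rcases hij.lt_or_gt with h | h
    · exact sequentialPlan_not_swap_of_lt hQ h t
    · exact fun hswap => sequentialPlan_not_swap_of_lt hQ h t hswap.symm

end SequentialPlan

theorem wellformed_mrpp_solvable_general {V : Type*} (G : SimpleGraph V)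
    (n : ℕ) (s g : Fin n → V)
    (hwf : ∀ i : Fin n, ∃ q : G.Walk (s i) (g i),
      ∀ w ∈ q.support, ∀ j : Fin n, j ≠ i → w ≠ s j ∧ w ≠ g j) :
    ∃ (T : ℕ) (p : Fin n → ℕ → V), IsMRPPSolution G s g T p := by
  choose Q hQ using hwf
  exact ⟨_, _, isMRPPSolution_sequentialPlan hQ⟩

/-- A well-formed MRPP instance on a connected graph — one in which each robot's start
and goal are joined by a path avoiding all other robots' starts and goals — is
solvable. -/
theorem wellformed_mrpp_solvable {V : Type*} [Fintype V] (G : SimpleGraph V)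
    (hG : G.Connected) (n : ℕ) (s g : Fin n → V)
    (hs : Function.Injective s) (hg : Function.Injective g)
    (hwf : ∀ i : Fin n, ∃ q : G.Walk (s i) (g i),
      ∀ w ∈ q.support, ∀ j : Fin n, j ≠ i → w ≠ s j ∧ w ≠ g j) :
    ∃ (T : ℕ) (p : Fin n → ℕ → V), IsMRPPSolution G s g T p :=
  wellformed_mrpp_solvable_general G n s g hwf
end

section
/- Let G=(V,E) be a connected simple graph that admits a well-connected set of size at least 2n. Then every MRPP instance on G with n robots, pairwise-distinct start vertices s_1,…,s_n and pairwise-distinct goal vertices g_1,…,g_n — regardless of the distribution of the starts and goals — is solvable: there exist a time horizon T ∈ ℕ and trajectories p_i : {0,1,…,T} → V with p_i(0) = s_i, p_i(T) = g_i, each step staying in place or moving along an edge of G, no two robots at the same vertex at the same time step, and no two robots swapping along an edge in the same step. -/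
open Function Set

namespace MRPP

variable {V ι : Type*} {G : SimpleGraph V}

/-- A configuration `c : ι → V` places robot `i` at `c i`; in a move exactly one robot crosses
an edge into a free vertex. -/
def Move (G : SimpleGraph V) (c c' : ι → V) : Prop :=
  ∃ i, G.Adj (c i) (c' i) ∧ c' i ∉ range c ∧ ∀ j ≠ i, c' j = c j

def Reachable (G : SimpleGraph V) : (ι → V) → (ι → V) → Prop :=
  Relation.ReflTransGen (Move G)

section Update

variable [DecidableEq ι] {c : ι → V}

lemma range_update_of_injective (hc : Injective c) (i : ι) (v : V) :
    range (update c i v) = insert v (range c \ {c i}) := by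
  ext x
  simp only [mem_range, mem_insert_iff, mem_sdiff, mem_singleton_iff]
  constructor
  · rintro ⟨j, rfl⟩
    by_cases hj : j = i
    · simp [hj]
    · rw [update_of_ne hj]
      exact Or.inr ⟨⟨j, rfl⟩, hc.ne hj⟩
  · rintro (rfl | ⟨⟨j, rfl⟩, hji⟩)
    · exact ⟨i, update_self ..⟩
    · exact ⟨j, update_of_ne (fun h => hji (congrArg c h)) _ _⟩

lemma move_update {i : ι} {v : V} (hadj : G.Adj (c i) v) (hv : v ∉ range c) :
    Move G c (update c i v) :=
  ⟨i, by simpa using hadj, by simpa using hv, fun _ hj => update_of_ne hj _ _⟩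

end Update

namespace Move

variable {c c' : ι → V}

lemma injective (h : Move G c c') (hc : Injective c) : Injective c' := by
  obtain ⟨i, -, hfree, hrest⟩ := h
  intro j k hjk
  by_cases hj : j = i <;> by_cases hk : k = i
  · rw [hj, hk]
  · subst hj; rw [hrest k hk] at hjk; exact (hfree ⟨k, hjk.symm⟩).elim
  · subst hk; rw [hrest j hj] at hjk; exact (hfree ⟨j, hjk⟩).elim
  · rw [hrest j hj, hrest k hk] at hjk; exact hc hjk

lemma symm (h : Move G c c') (hc : Injective c) : Move G c' c := by
  obtain ⟨i, hadj, hfree, hrest⟩ := h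
  refine ⟨i, hadj.symm, ?_, fun j hj => (hrest j hj).symm⟩
  rintro ⟨j, hj⟩
  by_cases hji : j = i
  · exact hadj.ne (hji ▸ hj).symm
  · exact hji (hc ((hrest j hji).symm.trans hj))

end Move

namespace Reachable

variable {c c' : ι → V}

lemma injective (h : Reachable G c c') (hc : Injective c) : Injective c' := by
  induction h with
  | refl => exact hc
  | tail _ hmove ih => exact hmove.injective ih

lemma symm (h : Reachable G c c') (hc : Injective c) : Reachable G c' c := by
  induction h with
  | refl => exact .refl
  | tail hreach hmove ih => exact .head (hmove.symm (Reachable.injective hreach hc)) ih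

variable [DecidableEq ι]

lemma update_of_walk {i : ι} {u b : V} (w : G.Walk u b) (hu : c i = u)
    (hw : ∀ j ≠ i, c j ∉ w.support) : Reachable G c (update c i b) := by
  induction w generalizing c with
  | nil => subst hu; rw [update_eq_self]; exact .refl
  | @cons u x b hadj q ih =>
    have hx : x ∉ range c := by
      rintro ⟨j, rfl⟩
      by_cases hj : j = i
      · exact hadj.ne (hj ▸ hu).symm
      · exact hw j hj (by simp)
    have hrest : Reachable G (update c i x) (update (update c i x) i b) := by
      refine ih (update_self ..) fun j hj hjq => hw j hj ?_
      rw [update_of_ne hj] at hjq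
      exact List.mem_cons_of_mem _ hjq
    rw [update_idem] at hrest
    exact .head (move_update (hu ▸ hadj) hx) hrest

/-- The hole at `f` travels back along the walk to `u`: every robot met on the way steps
forward by one. -/
lemma exists_range_eq_insert_sdiff (hc : Injective c) {u f : V} (w : G.Walk u f)
    (hu : u ∈ range c) (hf : f ∉ range c) :
    ∃ d, Reachable G c d ∧ range d = insert f (range c \ {u}) := by
  induction w generalizing c with
  | nil => exact (hf hu).elim
  | @cons u x f hadj q ih =>
    obtain ⟨i, rfl⟩ := hu
    by_cases hx : x ∈ range c
    · obtain ⟨d, hcd, hd⟩ := ih hc hx hf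
      have hxf : x ≠ f := fun h => hf (h ▸ hx)
      obtain ⟨k, hk⟩ : c i ∈ range d := by
        rw [hd]; exact mem_insert_of_mem _ ⟨⟨i, rfl⟩, hadj.ne⟩
      have hx' : x ∉ range d := by simp [hd, hxf]
      refine ⟨update d k x, hcd.tail (move_update (hk ▸ hadj) hx'), ?_⟩
      rw [range_update_of_injective (hcd.injective hc), hk, hd]
      ext y
      simp only [mem_insert_iff, mem_sdiff, mem_singleton_iff]
      grind
    · have hmove := move_update (i := i) hadj hx
      have hrange := range_update_of_injective hc i x
      by_cases hxf : x = f
      · subst hxf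
        exact ⟨_, .single hmove, hrange⟩
      · obtain ⟨d, hcd, hd⟩ :=
          ih (hmove.injective hc) (by simp [hrange]) (by simp [hrange, hf, Ne.symm hxf])
        refine ⟨d, .head hmove hcd, ?_⟩
        rw [hd, hrange]
        ext y
        simp only [mem_insert_iff, mem_sdiff, mem_singleton_iff]
        grind

end Reachable

section Parking

variable [Finite ι] {M : Set V}

lemma exists_mem_notMem_range (hM : Nat.card ι < M.ncard) {c : ι → V} (hc : Injective c) :
    ∃ f ∈ M, f ∉ range c :=
  exists_mem_notMem_of_ncard_lt_ncard (by rwa [ncard_range_of_injective hc])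

lemma exists_reachable_range_subset (hG : G.Preconnected) (hM : Nat.card ι < M.ncard)
    {c : ι → V} (hc : Injective c) : ∃ d, Reachable G c d ∧ range d ⊆ M := by
  classical
  induction hk : (range c \ M).ncard using Nat.strong_induction_on generalizing c with
  | _ k ih =>
    by_cases hcM : range c ⊆ M
    · exact ⟨c, .refl, hcM⟩
    obtain ⟨u, hu, huM⟩ := not_subset.mp hcM
    obtain ⟨f, hfM, hf⟩ := exists_mem_notMem_range hM hc
    obtain ⟨w⟩ := hG u f
    obtain ⟨d, hcd, hd⟩ := Reachable.exists_range_eq_insert_sdiff hc w hu hf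
    have hdM : range d \ M = (range c \ M) \ {u} := by
      rw [hd]
      ext y
      simp only [mem_insert_iff, mem_sdiff, mem_singleton_iff]
      grind
    have hlt : (range d \ M).ncard < k := hk ▸ hdM ▸ ncard_sdiff_singleton_lt_of_mem ⟨hu, huM⟩
    obtain ⟨e, hde, heM⟩ := ih _ hlt (hcd.injective hc) rfl
    exact ⟨e, hcd.trans hde, heM⟩

end Parking

section Rearrangement

variable {M : Set V}

lemma range_update_subset_of_mem [DecidableEq ι] {c : ι → V} (hc : Injective c)
    (hcM : range c ⊆ M) (i : ι) {b : V} (hbM : b ∈ M) : range (update c i b) ⊆ M := by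
  rw [range_update_of_injective hc]
  exact insert_subset hbM (sdiff_subset.trans hcM)

variable (hlink : ∀ u ∈ M, ∀ v ∈ M, u ≠ v →
    ∃ p : G.Walk u v, ∀ w ∈ p.support, w ∈ M → w = u ∨ w = v)
include hlink

lemma reachable_update_of_mem [DecidableEq ι] {c : ι → V} (hc : Injective c)
    (hcM : range c ⊆ M) (i : ι) {b : V} (hbM : b ∈ M) (hb : b ∉ range c) :
    Reachable G c (update c i b) := by
  obtain ⟨p, hp⟩ := hlink _ (hcM ⟨i, rfl⟩) b hbM fun h => hb ⟨i, h⟩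
  refine Reachable.update_of_walk p rfl fun j hj hjp => ?_
  rcases hp _ hjp (hcM ⟨j, rfl⟩) with h | h
  · exact hj (hc h)
  · exact hb ⟨j, h⟩

variable [Finite ι] (hM : Nat.card ι < M.ncard)
include hM

/-- If `c' i` is occupied, its occupant is first sent to a free vertex of `M`. -/
lemma exists_reachable_apply_eq [DecidableEq ι] {c c' : ι → V} (hc : Injective c)
    (hcM : range c ⊆ M) (hc' : Injective c') (hc'M : range c' ⊆ M) (i : ι) :
    ∃ d, Reachable G c d ∧ range d ⊆ M ∧ d i = c' i ∧ ∀ k, c k = c' k → d k = c' k := by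
  obtain ⟨c₂, hcc₂, hc₂M, hfree, hagree⟩ : ∃ c₂, Reachable G c c₂ ∧ range c₂ ⊆ M ∧
      c' i ∉ range c₂ ∧ ∀ k, c k ≠ c' i → c₂ k = c k := by
    by_cases hocc : c' i ∈ range c
    · obtain ⟨j, hj⟩ := hocc
      obtain ⟨f, hfM, hf⟩ := exists_mem_notMem_range hM hc
      refine ⟨update c j f, reachable_update_of_mem hlink hc hcM j hfM hf,
        range_update_subset_of_mem hc hcM j hfM, ?_,
        fun k hk => update_of_ne (fun h => hk (by rw [h, hj])) _ _⟩
      rw [range_update_of_injective hc, ← hj]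
      rintro (h | ⟨-, h⟩)
      · exact hf ⟨j, h⟩
      · exact h rfl
    · exact ⟨c, .refl, hcM, hocc, fun _ _ => rfl⟩
  have hc₂ := hcc₂.injective hc
  refine ⟨update c₂ i (c' i), hcc₂.trans (reachable_update_of_mem hlink hc₂ hc₂M i
    (hc'M ⟨i, rfl⟩) hfree), range_update_subset_of_mem hc₂ hc₂M i (hc'M ⟨i, rfl⟩),
    update_self .., fun k hk => ?_⟩
  by_cases hki : k = i
  · rw [hki, update_self]
  · rw [update_of_ne hki, hagree k (hk ▸ hc'.ne hki), hk]

lemma reachable_of_range_subset {c c' : ι → V} (hc : Injective c) (hcM : range c ⊆ M)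
    (hc' : Injective c') (hc'M : range c' ⊆ M) : Reachable G c c' := by
  classical
  cases nonempty_fintype ι
  suffices h : ∀ s : Finset ι, ∃ d, Reachable G c d ∧ range d ⊆ M ∧ ∀ k ∈ s, d k = c' k by
    obtain ⟨d, hcd, -, hd⟩ := h Finset.univ
    rwa [funext fun k => hd k (Finset.mem_univ k)] at hcd
  intro s
  induction s using Finset.induction_on with
  | empty => exact ⟨c, .refl, hcM, by simp⟩
  | insert i s _ ih =>
    obtain ⟨d, hcd, hdM, hd⟩ := ih
    obtain ⟨e, hde, heM, hei, he⟩ :=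
      exists_reachable_apply_eq hlink hM (hcd.injective hc) hdM hc' hc'M i
    refine ⟨e, hcd.trans hde, heM, fun k hk => ?_⟩
    rcases Finset.mem_insert.mp hk with rfl | hk
    · exact hei
    · exact he k (hd k hk)

end Rearrangement

end MRPP

/-- At most one robot moves, so no swap can occur. -/
lemma IsMRPPSolution.snoc_move {V : Type*} {G : SimpleGraph V} {n : ℕ} {s c c' : Fin n → V}
    {T : ℕ} {p : Fin n → ℕ → V} (hp : IsMRPPSolution G s c T p) (hc : Injective c)
    (hmove : MRPP.Move G c c') :
    IsMRPPSolution G s c' (T + 1) (fun i t => if t ≤ T then p i t else c' i) := by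
  obtain ⟨h0, hT, hstep, hdist, hswap⟩ := hp
  have hc' := hmove.injective hc
  obtain ⟨k, hadj, -, hrest⟩ := hmove
  refine ⟨fun i => by simp [h0], fun i => by simp, ?_, ?_, ?_⟩
  · intro i t ht
    rcases (Nat.lt_succ_iff.mp ht).lt_or_eq with ht | rfl
    · simpa [ht.le, Nat.succ_le_of_lt ht] using hstep i t ht
    · simp only [le_refl, if_true, Nat.not_succ_le_self, if_false, hT]
      by_cases hik : i = k
      · exact Or.inr (hik ▸ hadj)
      · exact Or.inl (hrest i hik)
  · intro i j hij t ht
    rcases ht.lt_or_eq with ht | rfl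
    · simpa [Nat.le_of_lt_succ ht] using hdist i j hij t (Nat.le_of_lt_succ ht)
    · simpa using hc'.ne hij
  · rintro i j hij t ht ⟨hi, hj⟩
    rcases (Nat.lt_succ_iff.mp ht).lt_or_eq with ht | rfl
    · simp only [Nat.succ_le_of_lt ht, ht.le, if_true] at hi hj
      exact hswap i j hij t ht ⟨hi, hj⟩
    · simp only [le_refl, if_true, Nat.not_succ_le_self, if_false, hT] at hi hj
      by_cases hik : i = k
      · exact hij (hc' (hi.trans (hrest j (hik ▸ hij.symm)).symm))
      · exact hij (hc' ((hrest i hik).trans hj.symm))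

lemma MRPP.Reachable.exists_isMRPPSolution {V : Type*} {G : SimpleGraph V} {n : ℕ}
    {s g : Fin n → V} (h : MRPP.Reachable G s g) (hs : Injective s) :
    ∃ (T : ℕ) (p : Fin n → ℕ → V), IsMRPPSolution G s g T p := by
  induction h with
  | refl => exact ⟨0, fun i _ => s i, fun _ => rfl, fun _ => rfl, by simp,
      fun i j hij _ _ => hs.ne hij, by simp⟩
  | tail hreach hmove ih =>
    obtain ⟨T, p, hp⟩ := ih
    exact ⟨T + 1, _, hp.snoc_move (MRPP.Reachable.injective hreach hs) hmove⟩

theorem mrpp_solvable_of_wcs_general {V : Type*} (G : SimpleGraph V)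
    (hG : G.Connected) (n : ℕ)
    (hwcs : ∃ M : Set V, IsWCS G M ∧ 2 * n ≤ Nat.card M)
    (s g : Fin n → V) (hs : Function.Injective s) (hg : Function.Injective g) :
    ∃ (T : ℕ) (p : Fin n → ℕ → V), IsMRPPSolution G s g T p := by
  obtain ⟨M, ⟨hlink, -⟩, hM⟩ := hwcs
  refine MRPP.Reachable.exists_isMRPPSolution ?_ hs
  rcases n.eq_zero_or_pos with rfl | hn
  · rw [Subsingleton.elim s g]
    exact .refl
  have hcard : Nat.card (Fin n) < M.ncard := by
    rw [Nat.card_fin, ← Nat.card_coe_set_eq]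
    omega
  obtain ⟨s', hss', hs'M⟩ := MRPP.exists_reachable_range_subset hG.preconnected hcard hs
  obtain ⟨g', hgg', hg'M⟩ := MRPP.exists_reachable_range_subset hG.preconnected hcard hg
  have hs'g' := MRPP.reachable_of_range_subset hlink hcard (hss'.injective hs) hs'M
    (hgg'.injective hg) hg'M
  exact hss'.trans (hs'g'.trans (hgg'.symm hg))

/-- If a connected graph admits a well-connected set of size at least `2n`, then every
MRPP instance on it with `n` robots, pairwise-distinct starts and pairwise-distinct
goals — regardless of the distribution of starts and goals — is solvable. -/
theorem mrpp_solvable_of_wcs {V : Type*} [Fintype V] (G : SimpleGraph V)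
    (hG : G.Connected) (n : ℕ)
    (hwcs : ∃ M : Set V, IsWCS G M ∧ 2 * n ≤ Nat.card M)
    (s g : Fin n → V) (hs : Function.Injective s) (hg : Function.Injective g) :
    ∃ (T : ℕ) (p : Fin n → ℕ → V), IsMRPPSolution G s g T p :=
  mrpp_solvable_of_wcs_general G hG n hwcs s g hs hg
end
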